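/- In the self-similar regime, the apoptosis parameter keeping the linear shape factor constant is A(R) = ((1+λ)/λ)·( (l S⁻¹/(4R³))(l²−3/2) − (1/(1+λ))(1 − I₁(R)I_{l+1}(R)/(I₀(R)I_l(R))) + (2/R)I₁(R)/I₀(R) ); with this choice, the right-hand side of d(δ/R)/dt = (δ/R)·G(l,R,A,λ,S⁻¹) vanishes identically, so δ/R is conserved along the flow. -/

import Mathlib

noncomputable section

/-- Modified Bessel function of the first kind of order n. -/
def besselI (n : ℕ) (R : ℝ) : ℝ :=
  ∑' k : ℕ, (R / 2) ^ (2 * k + n) / ((Nat.factorial k : ℝ) * (Nat.factorial (k + n) : ℝ))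

/-- Linear growth rate of the shape factor. -/
def shapeG (l : ℕ) (R A lam Sinv : ℝ) : ℝ :=
  lam * A / (1 + lam) - (l * Sinv / (4 * R ^ 3)) * ((l : ℝ) ^ 2 - 3 / 2)
    + (1 / (1 + lam)) * (1 - besselI 1 R * besselI (l + 1) R / (besselI 0 R * besselI l R))
    - (2 / R) * (besselI 1 R / besselI 0 R)

/-- Self-similar apoptosis rate A(R) making the linear shape-factor growth rate vanish. -/
def Aself (l : ℕ) (lam Sinv R : ℝ) : ℝ :=
  ((1 + lam) / lam) *
    ((l * Sinv / (4 * R ^ 3)) * ((l : ℝ) ^ 2 - 3 / 2)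
      - (1 / (1 + lam)) * (1 - besselI 1 R * besselI (l + 1) R / (besselI 0 R * besselI l R))
      + (2 / R) * (besselI 1 R / besselI 0 R))

theorem shapeG_eq_mul_sub_Aself {lam : ℝ} (hlam : lam ≠ 0) (hlam' : 1 + lam ≠ 0)
    (l : ℕ) (R A Sinv : ℝ) :
    shapeG l R A lam Sinv = lam / (1 + lam) * (A - Aself l lam Sinv R) := by
  unfold shapeG Aself
  field_simp
  ring

theorem shapeG_Aself {lam : ℝ} (hlam : lam ≠ 0) (hlam' : 1 + lam ≠ 0) (l : ℕ) (R Sinv : ℝ) :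
    shapeG l R (Aself l lam Sinv R) lam Sinv = 0 := by
  rw [shapeG_eq_mul_sub_Aself hlam hlam', sub_self, mul_zero]

theorem eq_of_hasDerivAt_mul_of_eq_zero {𝕜 : Type*} [RCLike 𝕜] {f g : 𝕜 → 𝕜}
    (hf : ∀ t, HasDerivAt f (f t * g t) t) (hg : ∀ t, g t = 0) (t₁ t₂ : 𝕜) :
    f t₁ = f t₂ := by
  have hf₀ : ∀ t, HasDerivAt f 0 t := fun t => by simpa [hg t] using hf t
  exact is_const_of_deriv_eq_zero (fun t => (hf₀ t).differentiableAt) (fun t => (hf₀ t).deriv) _ _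

theorem self_similar_apoptosis_conserves_shape_factor_general
    (l : ℕ) (lam Sinv : ℝ) (hlam : 0 < lam) :
    (∀ R : ℝ, 0 < R → shapeG l R (Aself l lam Sinv R) lam Sinv = 0) ∧
    (∀ f Rt : ℝ → ℝ, (∀ t : ℝ, 0 < Rt t) →
      (∀ t : ℝ, HasDerivAt f (f t * shapeG l (Rt t) (Aself l lam Sinv (Rt t)) lam Sinv) t) →
      ∀ t₁ t₂ : ℝ, f t₁ = f t₂) := by
  have hG := shapeG_Aself hlam.ne' (by positivity) l
  exact ⟨fun R _ => hG R Sinv,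
    fun f Rt _ hf => eq_of_hasDerivAt_mul_of_eq_zero hf fun t => hG (Rt t) Sinv⟩

/-- With the time-dependent apoptosis A(R), the shape-factor growth rate vanishes
identically, so the shape factor δ/R is conserved along the flow. -/
theorem self_similar_apoptosis_conserves_shape_factor
    (l : ℕ) (hl : 2 ≤ l) (lam Sinv : ℝ) (hlam : 0 < lam) (hSinv : 0 ≤ Sinv) :
    (∀ R : ℝ, 0 < R → shapeG l R (Aself l lam Sinv R) lam Sinv = 0) ∧
    (∀ f Rt : ℝ → ℝ, (∀ t : ℝ, 0 < Rt t) →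
      (∀ t : ℝ, HasDerivAt f (f t * shapeG l (Rt t) (Aself l lam Sinv (Rt t)) lam Sinv) t) →
      ∀ t₁ t₂ : ℝ, f t₁ = f t₂) :=
  self_similar_apoptosis_conserves_shape_factor_general l lam Sinv hlam
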